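/- Let P_1 and P_2 be NLPs such that P_1 ↦_x P_2, where x is one of the transformations T (elimination of tautologies), P (positive reduction), or M (elimination of non-minimal rules). Then for every interpretation M, M is a partial stable model of P_1 if and only if M is a partial stable model of P_2. -/
import Mathlib


/-- A rule of a normal logic program:
`head ← bodyPos, not bodyNeg`. -/
structure Rule (α : Type) where
  head : α
  bodyPos : Finset α
  bodyNeg : Finset α
deriving DecidableEq

/-- A normal logic program (NLP): a finite set of rules. -/
abbrev NLP (α : Type) := Finset (Rule α)

variable {α : Type} [DecidableEq α]

/-- The atoms occurring in a rule. -/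
def Rule.atoms (r : Rule α) : Finset α :=
  insert r.head (r.bodyPos ∪ r.bodyNeg)

/-- The Herbrand base of a program: all atoms occurring in it. -/
def HB (P : NLP α) : Finset α := P.sup Rule.atoms

/-- A three-valued interpretation, given by its sets of true and false atoms. -/
structure Interp (α : Type) where
  T : Set α
  F : Set α

/-- `I` is a 3-valued interpretation over the Herbrand base `H`. -/
def IsInterp (H : Finset α) (I : Interp α) : Prop :=
  I.T ⊆ ↑H ∧ I.F ⊆ ↑H ∧ Disjoint I.T I.F

/-- A rule of a positive program obtained as a reduct; `hasU` records whether
the special atom `u` (undefined in every interpretation) occurs in its body. -/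
structure PosRule (α : Type) where
  head : α
  bodyPos : Finset α
  hasU : Prop

/-- The reduct `P/I`: delete every rule whose negative body meets `I.T`,
delete each `not b` with `b ∈ I.F`, and replace the remaining negative
literals by the special atom `u`. -/
def reduct (P : NLP α) (I : Interp α) : Set (PosRule α) :=
  { q | ∃ r ∈ P, (∀ b ∈ r.bodyNeg, b ∉ I.T) ∧
        q.head = r.head ∧ q.bodyPos = r.bodyPos ∧
        (q.hasU ↔ ∃ b ∈ r.bodyNeg, b ∉ I.F) }

/-- The `Ψ` operator of a positive program `Q` relative to the Herbrand base
`H`; the special atom `u` is neither true nor false in any interpretation. -/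
def PsiOp (H : Finset α) (Q : Set (PosRule α)) (J : Interp α) : Interp α where
  T := { c | c ∈ H ∧ ∃ q ∈ Q, q.head = c ∧ ¬ q.hasU ∧ ∀ a ∈ q.bodyPos, a ∈ J.T }
  F := { c | c ∈ H ∧ ∀ q ∈ Q, q.head = c → ∃ a ∈ q.bodyPos, a ∈ J.F }

/-- Iteration of `Ψ` starting from `⟨∅, H⟩`. -/
def PsiIter (H : Finset α) (Q : Set (PosRule α)) : ℕ → Interp α
  | 0 => ⟨∅, ↑H⟩
  | n + 1 => PsiOp H Q (PsiIter H Q n)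

/-- `Ω_P(I)`: the least three-valued model of the reduct `P/I`,
obtained as the `ω`-iteration of `Ψ`. -/
def OmegaOp (H : Finset α) (P : NLP α) (I : Interp α) : Interp α where
  T := ⋃ n, (PsiIter H (reduct P I) n).T
  F := ⋂ n, (PsiIter H (reduct P I) n).F

/-- `I` is a partial stable model of `P` (over Herbrand base `H`). -/
def IsPSModel (H : Finset α) (P : NLP α) (I : Interp α) : Prop :=
  IsInterp H I ∧ OmegaOp H P I = I

/-- Well-founded model: a partial stable model with `⊆`-minimal true part. -/
def IsWFModel (H : Finset α) (P : NLP α) (I : Interp α) : Prop :=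
  IsPSModel H P I ∧ ∀ J, IsPSModel H P J → ¬ J.T ⊂ I.T

/-- Regular model: a partial stable model with `⊆`-maximal true part. -/
def IsRegularModel (H : Finset α) (P : NLP α) (I : Interp α) : Prop :=
  IsPSModel H P I ∧ ∀ J, IsPSModel H P J → ¬ I.T ⊂ J.T

/-- Stable model: a partial stable model with `T ∪ F = H`. -/
def IsStableModel (H : Finset α) (P : NLP α) (I : Interp α) : Prop :=
  IsPSModel H P I ∧ I.T ∪ I.F = ↑H

/-- L-stable model: a partial stable model with `⊆`-maximal `T ∪ F`. -/
def IsLStableModel (H : Finset α) (P : NLP α) (I : Interp α) : Prop :=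
  IsPSModel H P I ∧ ∀ J, IsPSModel H P J → ¬ (I.T ∪ I.F) ⊂ (J.T ∪ J.F)

/-- `IsStatement P c V R`: there is a statement of `P` with conclusion `c`,
vulnerabilities `V` and rules `R`.  A statement is built from a rule
`r = c ← a₁,…,a_m, not b₁,…,not b_n ∈ P` together with statements `sᵢ` for the
positive body atoms `aᵢ` (with `r` not among their rules); its vulnerabilities
are `Vul(s₁) ∪ … ∪ Vul(s_m) ∪ {b₁,…,b_n}` and its rules are
`Rules(s₁) ∪ … ∪ Rules(s_m) ∪ {r}`. -/
inductive IsStatement (P : NLP α) : α → Finset α → Finset (Rule α) → Prop where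
  | mk (r : Rule α) (hr : r ∈ P) (v : α → Finset α) (ρ : α → Finset (Rule α))
      (hsub : ∀ a ∈ r.bodyPos, IsStatement P a (v a) (ρ a))
      (hnr : ∀ a ∈ r.bodyPos, r ∉ ρ a) :
      IsStatement P r.head (r.bodyPos.biUnion v ∪ r.bodyNeg)
        (insert r (r.bodyPos.biUnion ρ))

/-- `c` is an argument of `P`: it is the conclusion of some statement. -/
def IsArg (P : NLP α) (c : α) : Prop := ∃ V R, IsStatement P c V R

open Classical in
/-- The set `A_P` of arguments of `P`. -/
noncomputable def argsOf (P : NLP α) : Finset α := (HB P).filter (IsArg P)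

/-- `B` meets every vulnerability set of `a` in `P`. -/
def HitsVul (P : NLP α) (B : Finset α) (a : α) : Prop :=
  ∀ V R, IsStatement P a V R → ∃ b ∈ B, b ∈ V

/-- A SETAF: a finite set of arguments and an attack relation between
finite sets of arguments and arguments. -/
structure SETAF (α : Type) where
  args : Finset α
  att : Finset α → α → Prop

/-- Well-formedness of a SETAF: attackers are nonempty sets of arguments
attacking arguments, and attacking sets are `⊆`-minimal. -/
def SETAF.Wf (S : SETAF α) : Prop :=
  (∀ B a, S.att B a → B.Nonempty ∧ B ⊆ S.args ∧ a ∈ S.args) ∧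
  (∀ B a, S.att B a → ∀ B', B' ⊂ B → ¬ S.att B' a)

/-- The SETAF `𝔄_P` associated with an NLP `P`: its arguments are the
conclusions of the statements of `P`, and `B` attacks `a` iff `B` is a
`⊆`-minimal set of arguments meeting every vulnerability set of `a`. -/
noncomputable def setafOf (P : NLP α) : SETAF α where
  args := argsOf P
  att := fun B a =>
    B ⊆ argsOf P ∧ a ∈ argsOf P ∧ HitsVul P B a ∧ ∀ B', B' ⊂ B → ¬ HitsVul P B' a

/-- Labels for arguments. -/
inductive Lab : Type
  | inn | out | und
deriving DecidableEq

/-- `in(L)`. -/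
def labIn (S : SETAF α) (L : α → Lab) : Set α := { a | a ∈ S.args ∧ L a = Lab.inn }

/-- `out(L)`. -/
def labOut (S : SETAF α) (L : α → Lab) : Set α := { a | a ∈ S.args ∧ L a = Lab.out }

/-- `undec(L)`. -/
def labUnd (S : SETAF α) (L : α → Lab) : Set α := { a | a ∈ S.args ∧ L a = Lab.und }

/-- Admissible labelling. -/
def AdmissibleLab (S : SETAF α) (L : α → Lab) : Prop :=
  ∀ a ∈ S.args,
    (L a = Lab.inn → ∀ B, S.att B a → ∃ b ∈ B, L b = Lab.out) ∧
    (L a = Lab.out → ∃ B, S.att B a ∧ ∀ b ∈ B, L b = Lab.inn)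

/-- Complete labelling. -/
def CompleteLab (S : SETAF α) (L : α → Lab) : Prop :=
  AdmissibleLab S L ∧
  ∀ a ∈ S.args, L a = Lab.und →
    (∃ B, S.att B a ∧ ∀ b ∈ B, L b ≠ Lab.out) ∧
    (∀ B, S.att B a → ∃ b ∈ B, L b ≠ Lab.inn)

/-- Grounded labelling: complete with `⊆`-minimal `in(L)`. -/
def GroundedLab (S : SETAF α) (L : α → Lab) : Prop :=
  CompleteLab S L ∧ ∀ L', CompleteLab S L' → ¬ labIn S L' ⊂ labIn S L

/-- Preferred labelling: complete with `⊆`-maximal `in(L)`. -/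
def PreferredLab (S : SETAF α) (L : α → Lab) : Prop :=
  CompleteLab S L ∧ ∀ L', CompleteLab S L' → ¬ labIn S L ⊂ labIn S L'

/-- Stable labelling: complete with `undec(L) = ∅`. -/
def StableLab (S : SETAF α) (L : α → Lab) : Prop :=
  CompleteLab S L ∧ labUnd S L = ∅

/-- Semi-stable labelling: complete with `⊆`-minimal `undec(L)`. -/
def SemiStableLab (S : SETAF α) (L : α → Lab) : Prop :=
  CompleteLab S L ∧ ∀ L', CompleteLab S L' → ¬ labUnd S L' ⊂ labUnd S L

/-- `L2I_P`: the interpretation associated with a labelling of `𝔄_P`. -/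
def L2I (P : NLP α) (L : α → Lab) : Interp α where
  T := { c | c ∈ HB P ∧ c ∈ argsOf P ∧ L c = Lab.inn }
  F := { c | c ∈ HB P ∧ (c ∉ argsOf P ∨ (c ∈ argsOf P ∧ L c = Lab.out)) }

open Classical in
/-- `I2L`: the labelling associated with an interpretation (meaningful on
the arguments). -/
noncomputable def I2L (I : Interp α) : α → Lab := fun c =>
  if c ∈ I.T then Lab.inn else if c ∈ I.F then Lab.out else Lab.und

/-- `L2I_𝔄`: the interpretation `⟨in(L), out(L)⟩` associated with a labelling
of a SETAF `𝔄`. -/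
def L2Iset (S : SETAF α) (L : α → Lab) : Interp α := ⟨labIn S L, labOut S L⟩

/-- `V` meets every attacker of `a` in `S`. -/
def HitsAtt (S : SETAF α) (a : α) (V : Finset α) : Prop :=
  ∀ B, S.att B a → ∃ b ∈ B, b ∈ V

/-- `V ∈ V_a`: a `⊆`-minimal set of arguments meeting every attacker of `a`. -/
def MemVa (S : SETAF α) (a : α) (V : Finset α) : Prop :=
  V ⊆ S.args ∧ HitsAtt S a V ∧ ∀ V', V' ⊂ V → ¬ HitsAtt S a V'

open Classical in
/-- The NLP `P_𝔄` associated with a SETAF `𝔄`: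
`{ a ← not b₁,…,not b_n | a ∈ A, {b₁,…,b_n} ∈ V_a }`. -/
noncomputable def nlpOf (S : SETAF α) : NLP α :=
  ((S.args ×ˢ S.args.powerset).filter (fun p => MemVa S p.1 p.2)).image
    (fun p => { head := p.1, bodyPos := ∅, bodyNeg := p.2 })

/-- Redundancy-Free Atomic Logic Program: every rule is atomic (no positive
body), every atom is a head, and no rule's negative body strictly contains
that of another rule with the same head. -/
def IsRFALP (P : NLP α) : Prop :=
  (∀ r ∈ P, r.bodyPos = ∅) ∧
  HB P = P.image Rule.head ∧
  ∀ r ∈ P, ∀ r' ∈ P, r'.head = r.head → ¬ r'.bodyNeg ⊂ r.bodyNeg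

/-- Unfolding: replace a rule `c ← a, a₁,…,a_m, not b₁,…,not b_n` by all rules
obtained by resolving `a` against the rules of the program with head `a`. -/
def StepU (P₁ P₂ : NLP α) : Prop :=
  ∃ r ∈ P₁, ∃ a ∈ r.bodyPos,
    P₂ = P₁.erase r ∪
      (P₁.filter (fun r' => r'.head = a)).image
        (fun r' => { head := r.head,
                     bodyPos := r'.bodyPos ∪ r.bodyPos.erase a,
                     bodyNeg := r'.bodyNeg ∪ r.bodyNeg })

/-- Elimination of tautologies: delete a rule whose head occurs in its
positive body. -/
def StepT (P₁ P₂ : NLP α) : Prop :=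
  ∃ r ∈ P₁, r.head ∈ r.bodyPos ∧ P₂ = P₁.erase r

/-- Positive reduction: delete a literal `not b` from the body of a rule,
where `b` is not the head of any rule of the program. -/
def StepP (P₁ P₂ : NLP α) : Prop :=
  ∃ r ∈ P₁, ∃ b ∈ r.bodyNeg, (∀ r' ∈ P₁, r'.head ≠ b) ∧
    P₂ = insert { head := r.head, bodyPos := r.bodyPos,
                  bodyNeg := r.bodyNeg.erase b } (P₁.erase r)

/-- Elimination of non-minimal rules: delete a rule subsumed by a distinct
rule with the same head and smaller bodies. -/
def StepM (P₁ P₂ : NLP α) : Prop :=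
  ∃ r ∈ P₁, ∃ r' ∈ P₁, r ≠ r' ∧ r'.head = r.head ∧
    r'.bodyPos ⊆ r.bodyPos ∧ r'.bodyNeg ⊆ r.bodyNeg ∧ P₂ = P₁.erase r

/-- `↦_UTPM`: the union of the four transformations. -/
def StepUTPM (P₁ P₂ : NLP α) : Prop :=
  StepU P₁ P₂ ∨ StepT P₁ P₂ ∨ StepP P₁ P₂ ∨ StepM P₁ P₂

/-- `P` is irreducible w.r.t. `↦_UTPM`: there is no `P' ≠ P` with
`P ↦_UTPM P'`. -/
def UTPMIrreducible (P : NLP α) : Prop :=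
  ¬ ∃ P', StepUTPM P P' ∧ P' ≠ P

lemma Interp.ext' {I J : Interp α} (hT : I.T = J.T) (hF : I.F = J.F) : I = J := by
  cases I; cases J; simp_all

lemma psiOp_mono (H : Finset α) (Q : Set (PosRule α)) {J J' : Interp α}
    (hT : J.T ⊆ J'.T) (hF : J'.F ⊆ J.F) :
    (PsiOp H Q J).T ⊆ (PsiOp H Q J').T ∧ (PsiOp H Q J').F ⊆ (PsiOp H Q J).F := by
  constructor
  · rintro c ⟨hc, q, hq, h1, h2, h3⟩
    exact ⟨hc, q, hq, h1, h2, fun a ha => hT (h3 a ha)⟩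
  · rintro c ⟨hc, hall⟩
    refine ⟨hc, fun q hq hh => ?_⟩
    obtain ⟨a, ha, haF⟩ := hall q hq hh
    exact ⟨a, ha, hF haF⟩

lemma psiIter_mono (H : Finset α) (Q : Set (PosRule α)) :
    ∀ n, (PsiIter H Q n).T ⊆ (PsiIter H Q (n+1)).T ∧
         (PsiIter H Q (n+1)).F ⊆ (PsiIter H Q n).F := by
  intro n
  induction n with
  | zero =>
      constructor
      · intro c hc; exact absurd hc (Set.notMem_empty c)
      · rintro c ⟨hc, _⟩; exact hc
  | succ n ih => exact psiOp_mono H Q ih.1 ih.2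

lemma psiIter_eq (H : Finset α) (Q₁ Q₂ : Set (PosRule α))
    (hsub : Q₂ ⊆ Q₁)
    (hb : ∀ q ∈ Q₁, q ∈ Q₂ ∨ q.head ∈ q.bodyPos ∨
      ∃ q' ∈ Q₂, q'.head = q.head ∧ q'.bodyPos ⊆ q.bodyPos ∧ (q'.hasU → q.hasU)) :
    ∀ n, PsiIter H Q₁ n = PsiIter H Q₂ n := by
  intro n
  induction n with
  | zero => rfl
  | succ n ih =>
      apply Interp.ext'
      · apply Set.Subset.antisymm
        · rintro c ⟨hc, q, hq, h1, h2, h3⟩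
          rcases hb q hq with hq2 | hself | ⟨q', hq', e1, e2, e3⟩
          · exact ⟨hc, q, hq2, h1, h2, fun a ha => by rw [← ih]; exact h3 a ha⟩
          · have : c ∈ (PsiIter H Q₂ n).T := by
              rw [← ih]; exact h3 _ (h1 ▸ hself)
            exact (psiIter_mono H Q₂ n).1 this
          · exact ⟨hc, q', hq', e1.trans h1, fun hu => h2 (e3 hu),
              fun a ha => by rw [← ih]; exact h3 a (e2 ha)⟩
        · rintro c ⟨hc, q, hq, h1, h2, h3⟩
          exact ⟨hc, q, hsub hq, h1, h2, fun a ha => by rw [ih]; exact h3 a ha⟩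
      · apply Set.Subset.antisymm
        · rintro c ⟨hc, hall⟩
          refine ⟨hc, fun q hq hh => ?_⟩
          obtain ⟨a, ha, haF⟩ := hall q (hsub hq) hh
          rw [← ih]; exact ⟨a, ha, haF⟩
        · rintro c ⟨hc, hall⟩
          refine ⟨hc, fun q hq hh => ?_⟩
          rcases hb q hq with hq2 | hself | ⟨q', hq', e1, e2, e3⟩
          · obtain ⟨a, ha, haF⟩ := hall q hq2 hh
            rw [ih]; exact ⟨a, ha, haF⟩
          · refine ⟨c, hh ▸ hself, ?_⟩
            rw [ih]
            exact (psiIter_mono H Q₂ n).2 ⟨hc, hall⟩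
          · obtain ⟨a, ha, haF⟩ := hall q' hq' (e1.trans hh)
            rw [ih]; exact ⟨a, e2 ha, haF⟩

lemma omega_eq (H : Finset α) (P₁ P₂ : NLP α) (M : Interp α)
    (hsub : reduct P₂ M ⊆ reduct P₁ M)
    (hb : ∀ q ∈ reduct P₁ M, q ∈ reduct P₂ M ∨ q.head ∈ q.bodyPos ∨
      ∃ q' ∈ reduct P₂ M, q'.head = q.head ∧ q'.bodyPos ⊆ q.bodyPos ∧
        (q'.hasU → q.hasU)) :
    OmegaOp H P₁ M = OmegaOp H P₂ M := by
  have h := psiIter_eq H (reduct P₁ M) (reduct P₂ M) hsub hb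
  apply Interp.ext'
  · show (⋃ n, (PsiIter H (reduct P₁ M) n).T) = _
    exact Set.iUnion_congr fun n => by rw [h n]
  · show (⋂ n, (PsiIter H (reduct P₁ M) n).F) = _
    exact Set.iInter_congr fun n => by rw [h n]

lemma notHead_omega (H : Finset α) (P : NLP α) (I : Interp α) (b : α)
    (hbH : b ∈ H) (hhead : ∀ s ∈ P, s.head ≠ b) :
    b ∈ (OmegaOp H P I).F ∧ b ∉ (OmegaOp H P I).T := by
  constructor
  · refine Set.mem_iInter.2 fun n => ?_
    cases n with
    | zero => exact hbH
    | succ n =>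
        refine ⟨hbH, fun q hq hqh => ?_⟩
        obtain ⟨s, hs, _, he, _, _⟩ := hq
        exact absurd (he ▸ hqh : s.head = b) (hhead s hs)
  · intro hb
    obtain ⟨_, ⟨n, rfl⟩, hmem⟩ := hb
    cases n with
    | zero => exact hmem
    | succ n =>
        obtain ⟨_, q, hq, hqh, _, _⟩ := hmem
        obtain ⟨s, hs, _, he, _, _⟩ := hq
        exact hhead s hs (he ▸ hqh)


lemma reduct_stepP (P₁ : NLP α) (r : Rule α) (hr : r ∈ P₁) (b : α) (hb : b ∈ r.bodyNeg)
    (M : Interp α) (hbT : b ∉ M.T) (hbF : b ∈ M.F) :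
    reduct P₁ M = reduct (insert { head := r.head, bodyPos := r.bodyPos, bodyNeg := r.bodyNeg.erase b } (P₁.erase r)) M := by
  ext q
  constructor
  · rintro ⟨s, hs, hfil, h1, h2, h3⟩
    by_cases hsr : s = r
    · subst hsr
      refine ⟨_, Finset.mem_insert_self _ _,
        fun b' hb' => hfil b' (Finset.mem_of_mem_erase hb'), h1, h2, ?_⟩
      rw [h3]
      constructor
      · rintro ⟨b', hb', hb'F⟩
        rcases eq_or_ne b' b with rfl | hne
        · exact absurd hbF hb'F
        · exact ⟨b', Finset.mem_erase.2 ⟨hne, hb'⟩, hb'F⟩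
      · rintro ⟨b', hb', hb'F⟩
        exact ⟨b', Finset.mem_of_mem_erase hb', hb'F⟩
    · exact ⟨s, Finset.mem_insert_of_mem (Finset.mem_erase.2 ⟨hsr, hs⟩), hfil, h1, h2, h3⟩
  · rintro ⟨s, hs, hfil, h1, h2, h3⟩
    rcases Finset.mem_insert.1 hs with rfl | hs'
    · refine ⟨r, hr, ?_, h1, h2, ?_⟩
      · intro b' hb'
        rcases eq_or_ne b' b with rfl | hne
        · exact hbT
        · exact hfil b' (Finset.mem_erase.2 ⟨hne, hb'⟩)
      · rw [h3]
        constructor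
        · rintro ⟨b', hb', hb'F⟩
          exact ⟨b', Finset.mem_of_mem_erase hb', hb'F⟩
        · rintro ⟨b', hb', hb'F⟩
          rcases eq_or_ne b' b with rfl | hne
          · exact absurd hbF hb'F
          · exact ⟨b', Finset.mem_erase.2 ⟨hne, hb'⟩, hb'F⟩
    · exact ⟨s, Finset.mem_of_mem_erase hs', hfil, h1, h2, h3⟩

theorem stmt16 (P₁ P₂ : NLP α)
    (h : StepT P₁ P₂ ∨ StepP P₁ P₂ ∨ StepM P₁ P₂)
    (M : Interp α) (hM : IsInterp (HB P₁) M) :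
    IsPSModel (HB P₁) P₁ M ↔ IsPSModel (HB P₁) P₂ M := by
  have key : OmegaOp (HB P₁) P₁ M = M ↔ OmegaOp (HB P₁) P₂ M = M := by
    rcases h with hT | hP | hM'
    · obtain ⟨r, hr, hh, rfl⟩ := hT
      have heq : OmegaOp (HB P₁) P₁ M = OmegaOp (HB P₁) (P₁.erase r) M := by
        apply omega_eq
        · rintro q ⟨s, hs, hfil, h1, h2, h3⟩
          exact ⟨s, Finset.mem_of_mem_erase hs, hfil, h1, h2, h3⟩
        · rintro q ⟨s, hs, hfil, h1, h2, h3⟩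
          by_cases hsr : s = r
          · subst hsr; right; left; rw [h1, h2]; exact hh
          · exact Or.inl ⟨s, Finset.mem_erase.2 ⟨hsr, hs⟩, hfil, h1, h2, h3⟩
      rw [heq]
    · obtain ⟨r, hr, b, hb, hhead, rfl⟩ := hP
      have hbH : b ∈ HB P₁ :=
        Finset.mem_sup.2 ⟨r, hr, by simp [Rule.atoms, hb]⟩
      have hhead₂ : ∀ s ∈ insert { head := r.head, bodyPos := r.bodyPos, bodyNeg := r.bodyNeg.erase b } (P₁.erase r), s.head ≠ b := by
        intro s hs
        rcases Finset.mem_insert.1 hs with rfl | hs'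
        · exact hhead r hr
        · exact hhead s (Finset.mem_of_mem_erase hs')
      constructor
      · intro hfix
        have h1 := notHead_omega (HB P₁) P₁ M b hbH hhead
        rw [hfix] at h1
        have heq : OmegaOp (HB P₁) P₁ M
            = OmegaOp (HB P₁) (insert { head := r.head, bodyPos := r.bodyPos, bodyNeg := r.bodyNeg.erase b } (P₁.erase r)) M := by
          unfold OmegaOp
          rw [reduct_stepP P₁ r hr b hb M h1.2 h1.1]
        rw [← heq]; exact hfix
      · intro hfix
        have h1 := notHead_omega (HB P₁) _ M b hbH hhead₂
        rw [hfix] at h1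
        have heq : OmegaOp (HB P₁) P₁ M
            = OmegaOp (HB P₁) (insert { head := r.head, bodyPos := r.bodyPos, bodyNeg := r.bodyNeg.erase b } (P₁.erase r)) M := by
          unfold OmegaOp
          rw [reduct_stepP P₁ r hr b hb M h1.2 h1.1]
        rw [heq]; exact hfix
    · obtain ⟨r, hr, r', hr', hne, hh, hpos, hneg, rfl⟩ := hM'
      have heq : OmegaOp (HB P₁) P₁ M = OmegaOp (HB P₁) (P₁.erase r) M := by
        apply omega_eq
        · rintro q ⟨s, hs, hfil, h1, h2, h3⟩
          exact ⟨s, Finset.mem_of_mem_erase hs, hfil, h1, h2, h3⟩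
        · rintro q ⟨s, hs, hfil, h1, h2, h3⟩
          by_cases hsr : s = r
          · subst hsr
            right; right
            refine ⟨⟨r'.head, r'.bodyPos, ∃ b' ∈ r'.bodyNeg, b' ∉ M.F⟩,
              ⟨r', Finset.mem_erase.2 ⟨hne.symm, hr'⟩,
                fun b' hb' => hfil b' (hneg hb'), rfl, rfl, Iff.rfl⟩,
              hh.trans h1.symm, fun a ha => h2 ▸ hpos ha, ?_⟩
            rintro ⟨b', hb', hf⟩
            exact h3.mpr ⟨b', hneg hb', hf⟩
          · exact Or.inl ⟨s, Finset.mem_erase.2 ⟨hsr, hs⟩, hfil, h1, h2, h3⟩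
      rw [heq]
  constructor
  · rintro ⟨hi, hf⟩; exact ⟨hi, key.mp hf⟩
  · rintro ⟨hi, hf⟩; exact ⟨hi, key.mpr hf⟩
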